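/- The polynomial P = Σ_{σ,σ' ∈ S₅} X_{σ(1)σ(2)} · X_{σ(3)σ(4)} · X_{σ'(1)σ'(2)} · X_{σ'(3)σ'(4)} · X_{σ(5)σ'(5)} (where terms with σ(5) = σ'(5) are omitted, i.e. contribute 0) is homogeneous of degree 5, and the coefficient of the monomial X₁₂² · X₃₄ · X₃₅ · X₄₅ in P is nonzero (it is a positive integer). -/
import Mathlib
set_option maxRecDepth 4000


/-- The index set `I = {(i,j) : 1 ≤ i < j ≤ 5}` (with `Fin 5` indexing `{1, …, 5}`). -/
abbrev Idx : Type := {p : Fin 5 × Fin 5 // p.1 < p.2}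

/-- The variable `X_{ab}` for `a ≠ b`, namely `X_{(a,b)}` if `a < b` and `X_{(b,a)}` if
`b < a`; terms with `a = b` are omitted, i.e. contribute `0`. -/
noncomputable def Xab (a b : Fin 5) : MvPolynomial Idx ℂ :=
  if h : a < b then MvPolynomial.X ⟨(a, b), h⟩
  else if h' : b < a then MvPolynomial.X ⟨(b, a), h'⟩
  else 0

/-- The polynomial
`P = Σ_{σ,σ' ∈ S₅} X_{σ(1)σ(2)} X_{σ(3)σ(4)} X_{σ'(1)σ'(2)} X_{σ'(3)σ'(4)} X_{σ(5)σ'(5)}`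
(terms with `σ(5) = σ'(5)` contributing `0`). -/
noncomputable def P : MvPolynomial Idx ℂ :=
  ∑ σ : Equiv.Perm (Fin 5), ∑ σ' : Equiv.Perm (Fin 5),
    Xab (σ 0) (σ 1) * Xab (σ 2) (σ 3) * Xab (σ' 0) (σ' 1) * Xab (σ' 2) (σ' 3) *
      Xab (σ 4) (σ' 4)

/-- The exponents of the monomial `X₁₂² · X₃₄ · X₃₅ · X₄₅`. -/
noncomputable def m : Idx →₀ ℕ :=
  Finsupp.single ⟨(0, 1), by decide⟩ 2 + Finsupp.single ⟨(2, 3), by decide⟩ 1 +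
    Finsupp.single ⟨(2, 4), by decide⟩ 1 + Finsupp.single ⟨(3, 4), by decide⟩ 1

/-- Total version of the index map. -/
def idx (a b : Fin 5) : Idx :=
  if h : a < b then ⟨(a, b), h⟩
  else if h' : b < a then ⟨(b, a), h'⟩
  else ⟨(0, 1), by decide⟩

lemma Xab_eq (a b : Fin 5) :
    Xab a b = if a = b then 0 else MvPolynomial.X (idx a b) := by
  unfold Xab idx
  rcases lt_trichotomy a b with h | h | h
  · simp [h, h.ne]
  · simp [h, lt_irrefl]
  · simp [h, h.ne', not_lt_of_gt h]

/-- The exponent vector of the term indexed by `(σ, σ')` (when `σ 4 ≠ σ' 4`). -/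
noncomputable def E (σ σ' : Equiv.Perm (Fin 5)) : Idx →₀ ℕ :=
  Finsupp.single (idx (σ 0) (σ 1)) 1 + Finsupp.single (idx (σ 2) (σ 3)) 1 +
    Finsupp.single (idx (σ' 0) (σ' 1)) 1 + Finsupp.single (idx (σ' 2) (σ' 3)) 1 +
    Finsupp.single (idx (σ 4) (σ' 4)) 1

lemma term_eq (σ σ' : Equiv.Perm (Fin 5)) :
    Xab (σ 0) (σ 1) * Xab (σ 2) (σ 3) * Xab (σ' 0) (σ' 1) * Xab (σ' 2) (σ' 3) *
      Xab (σ 4) (σ' 4) =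
    if σ 4 = σ' 4 then 0 else MvPolynomial.monomial (E σ σ') 1 := by
  rw [Xab_eq, Xab_eq, Xab_eq, Xab_eq, Xab_eq]
  have h01 : σ 0 ≠ σ 1 := fun h => by simpa using σ.injective h
  have h23 : σ 2 ≠ σ 3 := fun h => by simpa using σ.injective h
  have h01' : σ' 0 ≠ σ' 1 := fun h => by simpa using σ'.injective h
  have h23' : σ' 2 ≠ σ' 3 := fun h => by simpa using σ'.injective h
  by_cases h : σ 4 = σ' 4
  · simp [h, h01, h23, h01', h23']
  · simp only [h01, h23, h01', h23', h, if_false, if_neg]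
    rw [E]
    simp only [MvPolynomial.X, MvPolynomial.monomial_mul, mul_one]

/-- The set of pairs `(σ, σ')` contributing the monomial `m`. -/
noncomputable def S : Finset (Equiv.Perm (Fin 5) × Equiv.Perm (Fin 5)) :=
  Finset.univ.filter (fun p => p.1 4 ≠ p.2 4 ∧ E p.1 p.2 = m)

/-- A witness permutation `σ = (0,1,3,4,2)` (the 3-cycle `(2 3 4)`). -/
def σw : Equiv.Perm (Fin 5) :=
  ⟨![0, 1, 3, 4, 2], ![0, 1, 4, 2, 3], by decide, by decide⟩

lemma E_witness : E σw 1 = m := by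
  have hσ0 : σw 0 = 0 := rfl
  have hσ1 : σw 1 = 1 := rfl
  have hσ2 : σw 2 = 3 := rfl
  have hσ3 : σw 3 = 4 := rfl
  have hσ4 : σw 4 = 2 := rfl
  rw [E, hσ0, hσ1, hσ2, hσ3, hσ4]
  show Finsupp.single (idx 0 1) 1 + Finsupp.single (idx 3 4) 1 +
      Finsupp.single (idx 0 1) 1 + Finsupp.single (idx 2 3) 1 +
      Finsupp.single (idx 2 4) 1 = m
  have h01 : idx 0 1 = ⟨(0, 1), by decide⟩ := rfl
  have h34 : idx 3 4 = ⟨(3, 4), by decide⟩ := rfl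
  have h23 : idx 2 3 = ⟨(2, 3), by decide⟩ := rfl
  have h24 : idx 2 4 = ⟨(2, 4), by decide⟩ := rfl
  rw [h01, h34, h23, h24, m]
  rw [show (2 : ℕ) = 1 + 1 from rfl, Finsupp.single_add]
  abel

lemma S_nonempty : S.Nonempty := by
  refine ⟨(σw, 1), Finset.mem_filter.mpr ⟨Finset.mem_univ _, ?_, E_witness⟩⟩
  show σw 4 ≠ (1 : Equiv.Perm (Fin 5)) 4
  decide

/-- The polynomial `P` is homogeneous of degree 5, and the coefficient of
the monomial `X₁₂² · X₃₄ · X₃₅ · X₄₅` in `P` is nonzero (a positive integer). -/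
theorem P_homogeneous_and_coeff_pos :
    P.IsHomogeneous 5 ∧ ∃ k : ℕ, 0 < k ∧ MvPolynomial.coeff m P = (k : ℂ) := by
  constructor
  · have hX : ∀ a b : Fin 5, (Xab a b).IsHomogeneous 1 := by
      intro a b
      rw [Xab_eq]
      split
      · exact MvPolynomial.isHomogeneous_zero _ _ _
      · exact MvPolynomial.isHomogeneous_X _ _
    apply MvPolynomial.IsHomogeneous.sum
    intro σ _
    apply MvPolynomial.IsHomogeneous.sum
    intro σ' _
    exact ((((hX _ _).mul (hX _ _)).mul (hX _ _)).mul (hX _ _)).mul (hX _ _)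
  · refine ⟨S.card, Finset.card_pos.mpr S_nonempty, ?_⟩
    rw [P]
    rw [MvPolynomial.coeff_sum]
    simp only [MvPolynomial.coeff_sum, term_eq]
    have : ∀ σ σ' : Equiv.Perm (Fin 5),
        MvPolynomial.coeff m (if σ 4 = σ' 4 then 0 else MvPolynomial.monomial (E σ σ') 1) =
        if σ 4 ≠ σ' 4 ∧ E σ σ' = m then (1 : ℂ) else 0 := by
      intro σ σ'
      by_cases h1 : σ 4 = σ' 4
      · rw [if_pos h1, if_neg (fun h => h.1 h1)]
        simp
      · rw [if_neg h1, MvPolynomial.coeff_monomial]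
        by_cases h2 : E σ σ' = m
        · rw [if_pos h2, if_pos ⟨h1, h2⟩]
        · rw [if_neg h2, if_neg (fun h => h2 h.2)]
    simp only [this]
    rw [← Finset.sum_product']
    rw [Finset.sum_boole]
    rw [S]
    norm_num
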